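/- Let n ≥ 1, let β be a function assigning a rational number to every 0-1 word of length n that satisfies the dual Bayer–Billera relations, and define α by α_F = Σ_{E ≤ F} β_E for all 0-1 words F of length n. Then α satisfies the Bayer–Billera relations. -/

import Mathlib

/-- `chk E` is the word `E` with its last letter flipped (`chk [] = []`). -/
def chk : List Bool → List Bool
  | [] => []
  | [b] => [!b]
  | b :: c :: rest => b :: chk (c :: rest)

/-- `comp E` is the complementary word, with every letter flipped. -/
def comp (E : List Bool) : List Bool := E.map (!·)

/-- `Eij i j` is the word `0^(i-1) 1 0^(j-i)`. -/
def Eij (i j : ℕ) : List Bool :=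
  List.replicate (i - 1) false ++ [true] ++ List.replicate (j - i) false

/-- The word `0^j`. -/
def zeros (j : ℕ) : List Bool := List.replicate j false

/-- The word `1^j`. -/
def ones (j : ℕ) : List Bool := List.replicate j true

/-- `β` satisfies the dual Bayer–Billera relations (for words of length `n`). -/
def DualBB (n : ℕ) (β : List Bool → ℚ) : Prop :=
  ∀ E F : List Bool, E.length + F.length = n →
    β (E ++ F) + β (chk E ++ F) = β (E ++ comp F) + β (chk E ++ comp F)

/-- `α` satisfies the Bayer–Billera relations (for words of length `n`). -/
def BB (n : ℕ) (α : List Bool → ℚ) : Prop :=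
  ∀ (j : ℕ) (E F : List Bool), 1 ≤ j →
    (E = [] ∨ E.getLast? = some true) →
    (F = [] ∨ F.head? = some true) →
    E.length + j + F.length = n →
    ∑ i ∈ Finset.Icc 1 j, (-1 : ℚ) ^ (i - 1) * α (E ++ Eij i j ++ F) =
      2 * (if Odd j then 1 else 0) * α (E ++ zeros j ++ F)

/-- The finset of all 0-1 words of length `n`. -/
def allWords : ℕ → Finset (List Bool)
  | 0 => {[]}
  | n + 1 => (allWords n).image (List.cons false) ∪ (allWords n).image (List.cons true)

/-- Pointwise order on words of equal length (`wleB E F = true` iff `E ≤ F`). -/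
def wleB : List Bool → List Bool → Bool
  | [], [] => true
  | a :: E, b :: F => (!a || b) && wleB E F
  | _, _ => false

/-!
Write `α (E G F) = ∑_{B ≤ G} T B` with `T W = ∑_{A ≤ E, C ≤ F} β (A W C)`, and let `T'` be `T`
with `C` replaced by its complement. The dual relation with a first part `P0` (so `Ě = P1`) says
`β (P0K) + β (P1K) = β (P0K̄) + β (P1K̄)`. Since `B ≤ E_{k+1,j}` means `B ∈ {0^j, E_{k+1,j}}`, this
gives `α (E E_{k+1,j} F) = V k + V (k+1)` with `V k = T' (0^k 1^(j-k))`, so the alternating sum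
telescopes to `V 0 - (-1)^j V j`. The same relation, summed over the last letter of `A` (free
because `E` ends in `1`; for `E = ε` use the relation with empty first part) or over the first
letter of `C` (free because `F` starts with `1`), gives `V 0 = V j = T 0^j = α (E 0^j F)`.
-/

open Finset List

lemma chk_append_singleton (P : List Bool) (b : Bool) : chk (P ++ [b]) = P ++ [!b] := by
  induction P with
  | nil => rfl
  | cons p P ih =>
    cases P with
    | nil => rfl
    | cons q P => exact congrArg (p :: ·) ih

lemma length_Eij {i j : ℕ} (hi : 1 ≤ i) (hij : i ≤ j) : (Eij i j).length = j := by
  simp [Eij]; omega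

lemma comp_append (X Y : List Bool) : comp (X ++ Y) = comp X ++ comp Y :=
  map_append

lemma comp_cons (b : Bool) (X : List Bool) : comp (b :: X) = (!b) :: comp X := rfl

lemma comp_replicate (m : ℕ) (b : Bool) : comp (replicate m b) = replicate m (!b) :=
  map_replicate

def wordsBelow : List Bool → Finset (List Bool)
  | [] => {[]}
  | false :: G => (wordsBelow G).image (cons false)
  | true :: G => (wordsBelow G).image (cons false) ∪ (wordsBelow G).image (cons true)

section WordsBelow

variable {M : Type*} [AddCommMonoid M]

lemma length_of_mem_wordsBelow {G A : List Bool} (hA : A ∈ wordsBelow G) :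
    A.length = G.length := by
  induction G generalizing A with
  | nil => simp_all [wordsBelow]
  | cons b G ih =>
    cases b
    · obtain ⟨B, hB, rfl⟩ := mem_image.1 hA
      simp [ih hB]
    · rcases mem_union.1 hA with hA | hA <;> obtain ⟨B, hB, rfl⟩ := mem_image.1 hA <;>
        simp [ih hB]

lemma filter_wleB_allWords (G : List Bool) :
    (allWords G.length).filter (fun E => wleB E G) = wordsBelow G := by
  induction G with
  | nil => rfl
  | cons b G ih =>
    cases b <;> simp [allWords, filter_union, filter_image, wleB, ih, wordsBelow]

lemma sum_wordsBelow_cons_false (G : List Bool) (f : List Bool → M) :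
    ∑ A ∈ wordsBelow (false :: G), f A = ∑ A ∈ wordsBelow G, f (false :: A) :=
  sum_image fun _ _ _ _ h => cons_injective h

lemma sum_wordsBelow_cons_true (G : List Bool) (f : List Bool → M) :
    ∑ A ∈ wordsBelow (true :: G), f A =
      ∑ A ∈ wordsBelow G, (f (false :: A) + f (true :: A)) := by
  have hdisj : Disjoint ((wordsBelow G).image (cons false)) ((wordsBelow G).image (cons true)) := by
    simp [Finset.disjoint_left]
  rw [wordsBelow, sum_union hdisj, sum_image fun _ _ _ _ h => cons_injective h,
    sum_image fun _ _ _ _ h => cons_injective h, sum_add_distrib]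

lemma sum_wordsBelow_append (X Y : List Bool) (f : List Bool → M) :
    ∑ A ∈ wordsBelow (X ++ Y), f A =
      ∑ A ∈ wordsBelow X, ∑ B ∈ wordsBelow Y, f (A ++ B) := by
  induction X generalizing f with
  | nil => simp [wordsBelow]
  | cons b X ih =>
    cases b
    · simp only [cons_append, sum_wordsBelow_cons_false, ih]
    · simp only [cons_append, sum_wordsBelow_cons_true, sum_add_distrib, ih]

lemma sum_wordsBelow_replicate_false (m : ℕ) (f : List Bool → M) :
    ∑ A ∈ wordsBelow (replicate m false), f A = f (replicate m false) := by
  induction m generalizing f with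
  | zero => simp [wordsBelow]
  | succ m ih => rw [replicate_succ, sum_wordsBelow_cons_false, ih]

lemma sum_wordsBelow_append_true (X : List Bool) (f : List Bool → M) :
    ∑ A ∈ wordsBelow (X ++ [true]), f A =
      ∑ A ∈ wordsBelow X, (f (A ++ [false]) + f (A ++ [true])) := by
  simp [sum_wordsBelow_append, wordsBelow]

lemma sum_wordsBelow_flip_replicate_false (k m : ℕ) (f : List Bool → M) :
    ∑ A ∈ wordsBelow (replicate k false ++ true :: replicate m false), f A =
      f (replicate k false ++ false :: replicate m false) +
        f (replicate k false ++ true :: replicate m false) := by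
  rw [sum_wordsBelow_append, sum_wordsBelow_replicate_false, sum_wordsBelow_cons_true,
    sum_wordsBelow_replicate_false]

lemma sum_wordsBelow_append_append (E G F : List Bool) (f : List Bool → M) :
    ∑ D ∈ wordsBelow (E ++ G ++ F), f D =
      ∑ B ∈ wordsBelow G, ∑ A ∈ wordsBelow E, ∑ C ∈ wordsBelow F, f (A ++ B ++ C) := by
  rw [sum_wordsBelow_append, sum_wordsBelow_append, sum_comm]

end WordsBelow

def sandwichSum (β : List Bool → ℚ) (E F : List Bool) (g : List Bool → List Bool)
    (W : List Bool) : ℚ :=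
  ∑ A ∈ wordsBelow E, ∑ C ∈ wordsBelow F, β (A ++ W ++ g C)

namespace DualBB

variable {n : ℕ} {β : List Bool → ℚ} {E F : List Bool}

lemma add_flip (hβ : DualBB n β) (P K : List Bool) (hlen : P.length + 1 + K.length = n) :
    β (P ++ false :: K) + β (P ++ true :: K) =
      β (P ++ false :: comp K) + β (P ++ true :: comp K) := by
  simpa [chk_append_singleton] using hβ (P ++ [false]) K (by simpa using hlen)

lemma sum_wordsBelow_comp (hβ : DualBB n β) {G : List Bool}
    (hG : G = [] ∨ G.getLast? = some true) (K : List Bool) (hlen : G.length + K.length = n) :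
    ∑ A ∈ wordsBelow G, β (A ++ K) = ∑ A ∈ wordsBelow G, β (A ++ comp K) := by
  rcases hG with rfl | hG
  · have h := hβ [] K (by simpa using hlen)
    simp only [chk, List.nil_append] at h
    simp only [wordsBelow, Finset.sum_singleton, List.nil_append]
    linarith
  · obtain ⟨X, rfl⟩ := getLast?_eq_some_iff.1 hG
    rw [sum_wordsBelow_append_true, sum_wordsBelow_append_true]
    refine sum_congr rfl fun A hA => ?_
    simpa using hβ.add_flip A K (by simp_all [length_of_mem_wordsBelow hA])


lemma sandwichSum_id_eq_comp_comp (hβ : DualBB n β) (hE : E = [] ∨ E.getLast? = some true)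
    (W : List Bool) (hlen : E.length + W.length + F.length = n) :
    sandwichSum β E F id W = sandwichSum β E F comp (comp W) := by
  unfold sandwichSum
  rw [sum_comm, sum_comm (s := wordsBelow E)]
  refine sum_congr rfl fun C hC => ?_
  simpa [comp_append] using hβ.sum_wordsBelow_comp hE (W ++ C)
    (by simp [length_of_mem_wordsBelow hC]; omega)

lemma sandwichSum_id_eq_comp (hβ : DualBB n β) (hF : F = [] ∨ F.head? = some true)
    (W : List Bool) (hlen : E.length + W.length + F.length = n) :
    sandwichSum β E F id W = sandwichSum β E F comp W := by
  rcases hF with rfl | hF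
  · rfl
  obtain ⟨F, rfl⟩ := head?_eq_some_iff.1 hF
  refine sum_congr rfl fun A hA => ?_
  rw [sum_wordsBelow_cons_true, sum_wordsBelow_cons_true]
  refine sum_congr rfl fun C hC => ?_
  have h := hβ.add_flip (A ++ W) C
    (by simp [length_of_mem_wordsBelow hA, length_of_mem_wordsBelow hC] at hlen ⊢; omega)
  simp only [id, comp_cons, Bool.not_false, Bool.not_true]
  linarith

lemma sandwichSum_flip (hβ : DualBB n β) (P W : List Bool)
    (hlen : E.length + P.length + 1 + W.length + F.length = n) :
    sandwichSum β E F id (P ++ false :: W) + sandwichSum β E F id (P ++ true :: W) =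
      sandwichSum β E F comp (P ++ false :: comp W) +
        sandwichSum β E F comp (P ++ true :: comp W) := by
  simp only [sandwichSum, ← sum_add_distrib]
  refine sum_congr rfl fun A hA => sum_congr rfl fun C hC => ?_
  simpa [comp_append] using hβ.add_flip (A ++ P) (W ++ C)
    (by simp [length_of_mem_wordsBelow hA, length_of_mem_wordsBelow hC]; omega)

lemma sum_wordsBelow_Eij_sandwichSum (hβ : DualBB n β) (k m : ℕ)
    (hlen : E.length + (k + m + 1) + F.length = n) :
    ∑ B ∈ wordsBelow (Eij (k + 1) (k + m + 1)), sandwichSum β E F id B =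
      sandwichSum β E F comp (replicate k false ++ replicate (m + 1) true) +
        sandwichSum β E F comp (replicate (k + 1) false ++ replicate m true) := by
  have hEij : Eij (k + 1) (k + m + 1) = replicate k false ++ true :: replicate m false := by
    simp [Eij, show k + m + 1 - (k + 1) = m by omega]
  rw [hEij, sum_wordsBelow_flip_replicate_false, hβ.sandwichSum_flip _ _ (by simp; omega),
    comp_replicate, add_comm, replicate_succ (n := m), replicate_succ' (n := k), append_assoc,
    singleton_append, Bool.not_false]

end DualBB

lemma sum_Icc_one_eq_sum_range {M : Type*} [AddCommMonoid M] (f : ℕ → M) (j : ℕ) :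
    ∑ i ∈ Icc 1 j, f i = ∑ k ∈ range j, f (k + 1) := by
  rw [range_eq_Ico, sum_Ico_add', zero_add, Finset.Ico_add_one_right_eq_Icc]

lemma sum_range_neg_one_pow_mul_add {R : Type*} [CommRing R] (V : ℕ → R) (j : ℕ) :
    ∑ k ∈ range j, (-1) ^ k * (V k + V (k + 1)) = V 0 - (-1) ^ j * V j := by
  have h := sum_range_sub' (fun k => (-1 : R) ^ k * V k) j
  rw [pow_zero, one_mul] at h
  rw [← h]
  exact sum_congr rfl fun k _ => by ring

lemma one_sub_neg_one_pow {R : Type*} [Ring R] (j : ℕ) :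
    1 - (-1 : R) ^ j = 2 * if Odd j then 1 else 0 := by
  rcases Nat.even_or_odd j with h | h
  · simp [h.neg_one_pow, Nat.not_odd_iff_even.2 h]
  · rw [h.neg_one_pow, if_pos h, sub_neg_eq_add, one_add_one_eq_two, mul_one]

theorem dualBB_implies_bayer_billera_general (n : ℕ)
    (β : List Bool → ℚ) (hβ : DualBB n β) (α : List Bool → ℚ)
    (hαβ : ∀ F : List Bool, F.length = n →
      α F = ∑ E ∈ (allWords n).filter (fun E => wleB E F), β E) :
    BB n α := by
  intro j E F _ hE hF hlen
  set T := sandwichSum β E F id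
  set V : ℕ → ℚ := fun k =>
    sandwichSum β E F comp (replicate k false ++ replicate (j - k) true)
  have hα (G : List Bool) (hG : G.length = j) :
      α (E ++ G ++ F) = ∑ B ∈ wordsBelow G, T B := by
    have hlenG : (E ++ G ++ F).length = n := by simp; omega
    rw [hαβ _ hlenG, ← hlenG, filter_wleB_allWords, sum_wordsBelow_append_append]
    rfl
  have hterm (k : ℕ) (hk : k < j) : α (E ++ Eij (k + 1) j ++ F) = V k + V (k + 1) := by
    obtain ⟨m, rfl⟩ := Nat.exists_eq_add_of_lt hk
    rw [hα _ (length_Eij (by omega) (by omega)), hβ.sum_wordsBelow_Eij_sandwichSum k m hlen]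
    simp only [V, show k + m + 1 - k = m + 1 by omega, show k + m + 1 - (k + 1) = m by omega]
  have hV0 : V 0 = T (zeros j) := by
    simpa [V, zeros, comp_replicate] using
      (hβ.sandwichSum_id_eq_comp_comp hE (zeros j) (by simpa [zeros] using hlen)).symm
  have hVj : V j = T (zeros j) := by
    simpa [V, zeros] using
      (hβ.sandwichSum_id_eq_comp hF (zeros j) (by simpa [zeros] using hlen)).symm
  calc ∑ i ∈ Icc 1 j, (-1 : ℚ) ^ (i - 1) * α (E ++ Eij i j ++ F)
      = ∑ k ∈ range j, (-1) ^ k * (V k + V (k + 1)) := by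
        rw [sum_Icc_one_eq_sum_range]
        exact sum_congr rfl fun k hk => by rw [hterm k (Finset.mem_range.1 hk), Nat.add_sub_cancel]
    _ = (1 - (-1) ^ j) * T (zeros j) := by rw [sum_range_neg_one_pow_mul_add, hV0, hVj]; ring
    _ = _ := by
        rw [one_sub_neg_one_pow, hα (zeros j) (length_replicate ..), zeros,
          sum_wordsBelow_replicate_false]

theorem dualBB_implies_bayer_billera (n : ℕ) (hn : 1 ≤ n)
    (β : List Bool → ℚ) (hβ : DualBB n β) (α : List Bool → ℚ)
    (hαβ : ∀ F : List Bool, F.length = n →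
      α F = ∑ E ∈ (allWords n).filter (fun E => wleB E F), β E) :
    BB n α :=
  dualBB_implies_bayer_billera_general n β hβ α hαβ
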